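/- A design w with nonsingular information matrix M(w) is D-optimal (i.e., maximizes det M(·) over all designs on {1,…,n}) if and only if max_{x ∈ {1,…,n}} f(x)'M⁻¹(w)f(x) = m. -/

import Mathlib

open Matrix

namespace Matrix.PosSemidef
open scoped MatrixOrder

noncomputable def sqrt {m : ℕ} {A : Matrix (Fin m) (Fin m) ℝ} (_hA : A.PosSemidef) :
    Matrix (Fin m) (Fin m) ℝ := CFC.sqrt A

lemma sqrt_mul_self {m : ℕ} {A : Matrix (Fin m) (Fin m) ℝ} (hA : A.PosSemidef) :
    hA.sqrt * hA.sqrt = A :=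
  CFC.sqrt_mul_sqrt_self A (Matrix.nonneg_iff_posSemidef.mpr hA)

lemma posSemidef_sqrt {m : ℕ} {A : Matrix (Fin m) (Fin m) ℝ} (hA : A.PosSemidef) :
    hA.sqrt.PosSemidef :=
  Matrix.nonneg_iff_posSemidef.mp (CFC.sqrt_nonneg A)

end Matrix.PosSemidef

namespace KWaux
variable {m : ℕ}

lemma mulVec_vmv (u v x : Fin m → ℝ) : vecMulVec u v *ᵥ x = (v ⬝ᵥ x) • u := by
  ext i
  simp [vecMulVec_apply, mulVec, dotProduct, Finset.mul_sum, mul_comm, mul_left_comm]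

lemma mul_vmv (A : Matrix (Fin m) (Fin m) ℝ) (u v : Fin m → ℝ) :
    A * vecMulVec u v = vecMulVec (A *ᵥ u) v := by
  ext i j
  simp [vecMulVec_apply, Matrix.mul_apply, mulVec, dotProduct, Finset.sum_mul, mul_assoc]

lemma vmv_mul (A : Matrix (Fin m) (Fin m) ℝ) (u v : Fin m → ℝ) :
    vecMulVec u v * A = vecMulVec u (Aᵀ *ᵥ v) := by
  ext i j
  simp [vecMulVec_apply, Matrix.mul_apply, mulVec, dotProduct, Finset.mul_sum, mul_comm,
    mul_left_comm]

lemma smul_vmv (c : ℝ) (u v : Fin m → ℝ) : c • vecMulVec u v = vecMulVec (c • u) v := by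
  ext i j; simp [vecMulVec_apply, mul_assoc]

lemma trace_vmv (u v : Fin m → ℝ) : (vecMulVec u v).trace = v ⬝ᵥ u := by
  simp [Matrix.trace, vecMulVec_apply, dotProduct, mul_comm]

lemma trace_mul_vmv (A : Matrix (Fin m) (Fin m) ℝ) (u v : Fin m → ℝ) :
    (A * vecMulVec u v).trace = v ⬝ᵥ (A *ᵥ u) := by
  rw [mul_vmv, trace_vmv]

lemma sum_mulVec' {n : ℕ} (A : Fin n → Matrix (Fin m) (Fin m) ℝ) (y : Fin m → ℝ) :
    (∑ x, A x) *ᵥ y = ∑ x, A x *ᵥ y := by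
  ext i
  simp [mulVec, dotProduct, Matrix.sum_apply, Finset.sum_mul]
  rw [Finset.sum_comm]

lemma dotProduct_sum' {n : ℕ} (y : Fin m → ℝ) (F : Fin n → Fin m → ℝ) :
    y ⬝ᵥ (∑ x, F x) = ∑ x, y ⬝ᵥ F x := by
  simp only [dotProduct, Finset.sum_apply, Finset.mul_sum]
  rw [Finset.sum_comm]

lemma psd_sum {n : ℕ} (g : Fin n → Fin m → ℝ) (v : Fin n → ℝ) (hv : ∀ x, 0 ≤ v x) :
    (∑ x, v x • vecMulVec (g x) (g x)).PosSemidef := by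
  refine Matrix.PosSemidef.of_dotProduct_mulVec_nonneg ?_ ?_
  · unfold Matrix.IsHermitian
    ext i j
    simp only [conjTranspose_apply, Matrix.sum_apply, Matrix.smul_apply, vecMulVec_apply,
      star_trivial, smul_eq_mul]
    exact Finset.sum_congr rfl fun x _ => by ring
  · intro y
    rw [sum_mulVec', dotProduct_sum']
    refine Finset.sum_nonneg fun x _ => ?_
    rw [smul_mulVec, mulVec_vmv, smul_smul, dotProduct_smul]
    have : star y ⬝ᵥ g x = g x ⬝ᵥ y := by
      simp [dotProduct, mul_comm]
    rw [smul_eq_mul, this]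
    have := mul_self_nonneg (g x ⬝ᵥ y)
    nlinarith [hv x]

lemma trace_eq_sum_eigenvalues {A : Matrix (Fin m) (Fin m) ℝ} (hA : A.IsHermitian) :
    A.trace = ∑ i, hA.eigenvalues i := by
  have h := hA.spectral_theorem
  calc A.trace = ((hA.eigenvectorUnitary : Matrix (Fin m) (Fin m) ℝ) *
        (diagonal (RCLike.ofReal ∘ hA.eigenvalues) *
          (star (hA.eigenvectorUnitary : Matrix (Fin m) (Fin m) ℝ)))).trace := by
        rw [← Matrix.mul_assoc]; exact congrArg Matrix.trace h
    _ = ((diagonal (RCLike.ofReal ∘ hA.eigenvalues) *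
          (star (hA.eigenvectorUnitary : Matrix (Fin m) (Fin m) ℝ))) *
          (hA.eigenvectorUnitary : Matrix (Fin m) (Fin m) ℝ)).trace := by
        rw [Matrix.trace_mul_comm]
    _ = (diagonal (RCLike.ofReal ∘ hA.eigenvalues)).trace := by
        rw [Matrix.mul_assoc]
        have : (star (hA.eigenvectorUnitary : Matrix (Fin m) (Fin m) ℝ)) *
            (hA.eigenvectorUnitary : Matrix (Fin m) (Fin m) ℝ) = 1 :=
          Matrix.UnitaryGroup.star_mul_self _
        rw [this, Matrix.mul_one]
    _ = ∑ i, hA.eigenvalues i := by simp [Matrix.trace_diagonal]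

lemma det_nonneg_of_psd {A : Matrix (Fin m) (Fin m) ℝ} (hA : A.PosSemidef) : 0 ≤ A.det := by
  rw [hA.1.det_eq_prod_eigenvalues]
  exact Finset.prod_nonneg fun i _ => by simpa using hA.eigenvalues_nonneg i

lemma det_le_one_of_psd_trace_le (hm : 0 < m) {A : Matrix (Fin m) (Fin m) ℝ}
    (hA : A.PosSemidef) (htr : A.trace ≤ m) : A.det ≤ 1 := by
  set lam := hA.1.eigenvalues with hlam
  have hnn : ∀ i, 0 ≤ lam i := fun i => hA.eigenvalues_nonneg i
  have hdet : A.det = ∏ i, lam i := by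
    rw [hA.1.det_eq_prod_eigenvalues]; simp; rfl
  have htr' : ∑ i, lam i = A.trace := (trace_eq_sum_eigenvalues hA.1).symm
  have hm' : (0:ℝ) < m := by exact_mod_cast hm
  have hgm := Real.geom_mean_le_arith_mean_weighted Finset.univ (fun _ => 1 / (m:ℝ)) lam
    (fun i _ => by positivity) (by simp; field_simp) (fun i _ => hnn i)
  have hprod : (∏ i, lam i ^ (1 / (m:ℝ))) = (∏ i, lam i) ^ (1 / (m:ℝ)) :=
    Real.finset_prod_rpow _ _ (fun i _ => hnn i) _
  rw [hprod] at hgm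
  have hsum : ∑ i : Fin m, 1 / (m:ℝ) * lam i = A.trace / m := by
    rw [← htr', ← Finset.mul_sum]; ring
  rw [hsum] at hgm
  have h1 : (∏ i, lam i) ^ (1 / (m:ℝ)) ≤ 1 := by
    refine hgm.trans ?_
    rw [div_le_one hm']
    exact htr
  have hP : (0:ℝ) ≤ ∏ i, lam i := Finset.prod_nonneg fun i _ => hnn i
  have key : (∏ i, lam i) = ((∏ i, lam i) ^ (1 / (m:ℝ))) ^ (m:ℕ) := by
    rw [← Real.rpow_natCast ((∏ i, lam i) ^ (1 / (m:ℝ))) m, ← Real.rpow_mul hP]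
    rw [one_div, inv_mul_cancel₀ (by exact_mod_cast hm.ne' : (m:ℝ) ≠ 0), Real.rpow_one]
  rw [hdet, key]
  calc ((∏ i, lam i) ^ (1 / (m:ℝ))) ^ (m:ℕ) ≤ 1 ^ (m:ℕ) :=
        pow_le_pow_left₀ (Real.rpow_nonneg hP _) h1 m
    _ = 1 := one_pow m


lemma exists_good_t (k : ℕ) (D : ℝ) (hD : (k:ℝ) + 1 < D) :
    ∃ t : ℝ, 0 < t ∧ t < 1 ∧ 1 < (1 - t)^k * ((1 - t) + t * D) := by
  have hk0 : (0:ℝ) ≤ k := Nat.cast_nonneg k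
  have hD1 : (1:ℝ) < D := by linarith
  have hD2 : (0:ℝ) < D - k - 1 := by linarith
  have hk1 : (0:ℝ) ≤ (k:ℝ) * (D - 1) := mul_nonneg hk0 (by linarith)
  have hc : (0:ℝ) < (k:ℝ) * (D - 1) + (D - (k:ℝ) - 1) + 1 := by linarith
  have main : ∀ t : ℝ, 0 < t → t < 1 → (k:ℝ) * (D - 1) * t < D - (k:ℝ) - 1 →
      1 < (1 - t)^k * ((1 - t) + t * D) := by
    intro t ht0 ht1 hlt
    have hbern : 1 - (k:ℝ) * t ≤ (1 - t)^k := by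
      calc 1 - (k:ℝ) * t = 1 + (k:ℝ) * (-t) := by ring
        _ ≤ (1 + -t)^k := one_add_mul_le_pow (by linarith : (-2:ℝ) ≤ -t) k
        _ = (1 - t)^k := by ring_nf
    have hpos2 : 0 < (1 - t) + t * D := by nlinarith
    have hstep : 1 < (1 - (k:ℝ) * t) * ((1 - t) + t * D) := by
      nlinarith [mul_pos ht0 (sub_pos.mpr hlt)]
    calc (1:ℝ) < (1 - (k:ℝ) * t) * ((1 - t) + t * D) := hstep
      _ ≤ (1 - t)^k * ((1 - t) + t * D) := mul_le_mul_of_nonneg_right hbern hpos2.le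
  refine ⟨(D - k - 1) / ((k:ℝ) * (D - 1) + (D - (k:ℝ) - 1) + 1), div_pos hD2 hc, ?_, main _
    (div_pos hD2 hc) ?_ ?_⟩
  · rw [div_lt_one hc]; linarith
  · rw [div_lt_one hc]; linarith
  · rw [← mul_div_assoc, div_lt_iff₀ hc]
    nlinarith [mul_pos hD2 hD2]

end KWaux

open KWaux in
/-- Kiefer–Wolfowitz equivalence theorem on a finite design space: a regular
design is D-optimal iff the maximum of its variance function equals `m`. -/
theorem kiefer_wolfowitz_equivalence (m n : ℕ) (hn : 0 < n)
    (f : Fin n → Fin m → ℝ) (hspan : Submodule.span ℝ (Set.range f) = ⊤)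
    (w : Fin n → ℝ) (hw0 : ∀ x, 0 ≤ w x) (hw1 : ∑ x, w x = 1)
    (M : Matrix (Fin m) (Fin m) ℝ)
    (hM : M = ∑ x, w x • vecMulVec (f x) (f x))
    (hreg : M.det ≠ 0) :
    (∀ w' : Fin n → ℝ, (∀ x, 0 ≤ w' x) → ∑ x, w' x = 1 →
        (∑ x, w' x • vecMulVec (f x) (f x)).det ≤ M.det) ↔
      Finset.univ.sup' ⟨⟨0, hn⟩, Finset.mem_univ _⟩
        (fun x => f x ⬝ᵥ M⁻¹.mulVec (f x)) = (m : ℝ) := by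
  rcases Nat.eq_zero_or_pos m with hm | hm
  · subst hm
    refine iff_of_true (fun w' _ _ => le_of_eq (by rw [Matrix.det_isEmpty, Matrix.det_isEmpty]))
      ?_
    have hz : (fun x => f x ⬝ᵥ M⁻¹.mulVec (f x)) = fun _ => (0:ℝ) := by
      funext x; simp [dotProduct]
    rw [hz]; refine (Finset.sup'_eq_of_forall _ _ fun _ _ => rfl).trans ?_
    simp
  -- main case : 0 < m
  have hunit : IsUnit M.det := isUnit_iff_ne_zero.mpr hreg
  set d : Fin n → ℝ := fun x => f x ⬝ᵥ M⁻¹.mulVec (f x) with hd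
  have hMpsd : M.PosSemidef := hM ▸ psd_sum f w hw0
  have hdet_pos : 0 < M.det := lt_of_le_of_ne (det_nonneg_of_psd hMpsd) (Ne.symm hreg)
  have hinv : M⁻¹ * M = 1 := Matrix.nonsing_inv_mul M hunit
  have hinv' : M * M⁻¹ = 1 := Matrix.mul_nonsing_inv M hunit
  -- the trace identity : ∑ x, w x * d x = m
  have htrace : ∑ x, w x * d x = (m:ℝ) := by
    have h1 : (M⁻¹ * M).trace = (m:ℝ) := by rw [hinv]; simp
    have h2 : M⁻¹ * M = ∑ x, w x • (M⁻¹ * vecMulVec (f x) (f x)) := by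
      rw [hM, Matrix.mul_sum]
      exact Finset.sum_congr rfl fun x _ => Matrix.mul_smul _ _ _
    rw [h2, Matrix.trace_sum] at h1
    rw [← h1]
    exact Finset.sum_congr rfl fun x _ => by
      rw [Matrix.trace_smul, trace_mul_vmv, smul_eq_mul]
  -- the sup is always at least m
  have hsge : (m:ℝ) ≤ Finset.univ.sup' ⟨⟨0, hn⟩, Finset.mem_univ _⟩ d := by
    calc (m:ℝ) = ∑ x, w x * d x := htrace.symm
      _ ≤ ∑ x, w x * Finset.univ.sup' ⟨⟨0, hn⟩, Finset.mem_univ _⟩ d :=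
          Finset.sum_le_sum fun x _ =>
            mul_le_mul_of_nonneg_left (Finset.le_sup' d (Finset.mem_univ x)) (hw0 x)
      _ = _ := by rw [← Finset.sum_mul, hw1, one_mul]
  constructor
  · -- optimality implies sup = m
    intro hopt
    refine le_antisymm ?_ hsge
    by_contra hgt
    push_neg at hgt
    obtain ⟨x₀, -, hx₀⟩ := Finset.exists_mem_eq_sup' ⟨⟨0, hn⟩, Finset.mem_univ _⟩ d
    rw [hx₀] at hgt
    obtain ⟨k, rfl⟩ : ∃ k, m = k + 1 := ⟨m - 1, (Nat.succ_pred_eq_of_pos hm).symm⟩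
    have hDm : (k:ℝ) + 1 < d x₀ := by push_cast at hgt; linarith
    obtain ⟨t, ht0, ht1, hfac⟩ := exists_good_t k (d x₀) hDm
    have ha0 : (0:ℝ) < 1 - t := by linarith
    -- the perturbed design
    set w' : Fin n → ℝ := fun y => (1 - t) * w y + t * (if y = x₀ then 1 else 0) with hw'
    have hw'0 : ∀ y, 0 ≤ w' y := by
      intro y
      have h1 := hw0 y
      show 0 ≤ (1 - t) * w y + t * (if y = x₀ then 1 else 0)
      split <;> nlinarith
    have hw'1 : ∑ y, w' y = 1 := by
      simp only [hw']
      rw [Finset.sum_add_distrib, ← Finset.mul_sum, hw1, ← Finset.mul_sum,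
        Finset.sum_ite_eq' Finset.univ x₀ (fun _ => (1:ℝ))]
      simp
    -- the perturbed information matrix
    have hM' : ∑ y, w' y • vecMulVec (f y) (f y)
        = M * ((1 - t) • (1 : Matrix (Fin (k+1)) (Fin (k+1)) ℝ)
            + t • vecMulVec (M⁻¹ *ᵥ f x₀) (f x₀)) := by
      have h1 : ∑ y, w' y • vecMulVec (f y) (f y)
          = (1 - t) • M + t • vecMulVec (f x₀) (f x₀) := by
        simp only [hw', add_smul, mul_smul, ite_smul, one_smul, zero_smul,
          smul_ite, smul_zero]
        rw [Finset.sum_add_distrib, ← Finset.smul_sum, ← hM,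
          Finset.sum_ite_eq' Finset.univ x₀ (fun y => t • vecMulVec (f y) (f y))]
        simp
      rw [h1, Matrix.mul_add, Matrix.mul_smul, Matrix.mul_one, Matrix.mul_smul, mul_vmv,
        Matrix.mulVec_mulVec, hinv', Matrix.one_mulVec]
    -- determinant computation
    have hfact : (1 - t) • (1 : Matrix (Fin (k+1)) (Fin (k+1)) ℝ)
          + t • vecMulVec (M⁻¹ *ᵥ f x₀) (f x₀)
        = (1 - t) • ((1 : Matrix (Fin (k+1)) (Fin (k+1)) ℝ)
            + vecMulVec ((t/(1 - t)) • (M⁻¹ *ᵥ f x₀)) (f x₀)) := by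
      rw [smul_add, ← smul_vmv, smul_smul, mul_div_cancel₀ _ ha0.ne']
    have hdetB : ((1 - t) • ((1 : Matrix (Fin (k+1)) (Fin (k+1)) ℝ)
          + vecMulVec ((t/(1 - t)) • (M⁻¹ *ᵥ f x₀)) (f x₀))).det
        = (1 - t) ^ (k+1) * (1 + (t/(1 - t)) * d x₀) := by
      rw [Matrix.det_smul, Matrix.vecMulVec_eq Unit, Matrix.det_one_add_replicateCol_mul_replicateRow]
      rw [dotProduct_smul, smul_eq_mul]
      simp [hd]
    have hdetM' : (∑ y, w' y • vecMulVec (f y) (f y)).det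
        = M.det * ((1 - t) ^ (k+1) * (1 + (t/(1 - t)) * d x₀)) := by
      rw [hM', Matrix.det_mul, hfact, hdetB]
    have hfac' : 1 < (1 - t) ^ (k+1) * (1 + (t/(1 - t)) * d x₀) := by
      have heq : (1 - t) ^ (k+1) * (1 + (t/(1 - t)) * d x₀)
          = (1 - t)^k * ((1 - t) + t * d x₀) := by
        rw [pow_succ]
        field_simp
      rw [heq]
      exact hfac
    have hcontra : M.det < (∑ y, w' y • vecMulVec (f y) (f y)).det := by
      rw [hdetM']
      exact (lt_mul_iff_one_lt_right hdet_pos).mpr hfac'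
    exact absurd (hopt w' hw'0 hw'1) (not_le.mpr hcontra)
  · -- sup = m implies optimality
    intro hsup w' hw'0 hw'1
    have hdle : ∀ x, d x ≤ (m:ℝ) := fun x =>
      hsup ▸ Finset.le_sup' d (Finset.mem_univ x)
    have hMinv_psd : M⁻¹.PosSemidef := hMpsd.inv
    set S : Matrix (Fin m) (Fin m) ℝ := hMinv_psd.sqrt with hS
    have hSS : S * S = M⁻¹ := hMinv_psd.sqrt_mul_self
    have hSpsd : S.PosSemidef := hMinv_psd.posSemidef_sqrt
    have hSsymm : Sᵀ = S := by
      have h := hSpsd.1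
      rwa [Matrix.IsHermitian, conjTranspose_eq_transpose_of_trivial] at h
    set M' : Matrix (Fin m) (Fin m) ℝ := ∑ x, w' x • vecMulVec (f x) (f x) with hM'
    set g : Fin n → Fin m → ℝ := fun x => S *ᵥ f x with hg
    have hN : S * M' * S = ∑ x, w' x • vecMulVec (g x) (g x) := by
      rw [hM', Matrix.mul_sum, Matrix.sum_mul]
      refine Finset.sum_congr rfl fun x _ => ?_
      rw [Matrix.mul_smul, Matrix.smul_mul, mul_vmv, vmv_mul, hSsymm]
    have hNpsd : (S * M' * S).PosSemidef := hN ▸ psd_sum g w' hw'0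
    have hgdot : ∀ x, g x ⬝ᵥ g x = d x := by
      intro x
      have h1 : d x = f x ⬝ᵥ (S * S) *ᵥ f x := by simp only [hd]; rw [hSS]
      rw [h1, ← Matrix.mulVec_mulVec]
      conv_rhs => rw [Matrix.dotProduct_mulVec, ← Matrix.mulVec_transpose, hSsymm]
    have htrN : (S * M' * S).trace ≤ (m:ℝ) := by
      rw [hN, Matrix.trace_sum]
      calc ∑ x, (w' x • vecMulVec (g x) (g x)).trace
          = ∑ x, w' x * d x := Finset.sum_congr rfl fun x _ => by
            rw [Matrix.trace_smul, trace_vmv, smul_eq_mul, hgdot]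
        _ ≤ ∑ x, w' x * (m:ℝ) := Finset.sum_le_sum fun x _ =>
            mul_le_mul_of_nonneg_left (hdle x) (hw'0 x)
        _ = (m:ℝ) := by rw [← Finset.sum_mul, hw'1, one_mul]
    have hdetN : (S * M' * S).det ≤ 1 := det_le_one_of_psd_trace_le hm hNpsd htrN
    have hdetNeq : (S * M' * S).det = M'.det * (M.det)⁻¹ := by
      have hMinvdet : M⁻¹.det = (M.det)⁻¹ := by
        have h3 : M⁻¹.det * M.det = 1 := by rw [← Matrix.det_mul, hinv, Matrix.det_one]
        field_simp at h3 ⊢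
        linarith [h3]
      have h2 : S.det * S.det = (M.det)⁻¹ := by rw [← Matrix.det_mul, hSS, hMinvdet]
      calc (S * M' * S).det = S.det * M'.det * S.det := by
            rw [Matrix.det_mul, Matrix.det_mul]
        _ = M'.det * (S.det * S.det) := by ring
        _ = M'.det * (M.det)⁻¹ := by rw [h2]
    rw [hdetNeq] at hdetN
    calc M'.det = M'.det * (M.det)⁻¹ * M.det := by
          field_simp
      _ ≤ 1 * M.det := mul_le_mul_of_nonneg_right hdetN hdet_pos.le
      _ = M.det := one_mul _
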